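/- arXiv:2405.12567 — 2 statements merged into one kernel-verified Lean document; each statement's English description precedes it below -/
import Mathlib

section
/- Let N ≥ 1, r ∈ {1,…,N}, δ > 0, and let Z₁,…,Z_N be i.i.d. real random variables with cdf F_Z. Then P(F_Z(Z_(r:N)) ≥ r/(N+1) − sqrt(log(1/δ)/(2(N+2)))) ≥ 1 − δ. If moreover F_Z is continuous, then also P(F_Z(Z_(r:N)) ≤ r/(N+1) + sqrt(log(1/δ)/(2(N+2)))) ≥ 1 − δ. -/
/-! If `F(Z_(r:N)) < τ`, then at least `r` of the `Z_i` fall in the lower set `{F < τ}`, whose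
`ν`-mass is at most `τ`; dually, for continuous `F`, if `F(Z_(r:N)) > τ`, then at least
`N - r + 1` of them fall in `{F > τ}`, of mass at most `1 - τ`. Either count is a sum of `N`
independent Bernoulli variables, so Hoeffding's inequality bounds the probability of the event by
`exp(-2((N+1)ε)²/N) ≤ exp(-2(N+2)ε²)`, which is `δ` for `ε = √(log(1/δ)/(2(N+2)))`. -/

open MeasureTheory ProbabilityTheory Set

/-- The `r`-th smallest value (order statistic, 1-indexed, ties with multiplicity)
of a finite real vector. -/
noncomputable def orderStat {N : ℕ} (S : Fin N → ℝ) (r : ℕ) : ℝ :=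
  ((Multiset.ofList (List.ofFn S)).sort (· ≤ ·)).getD (r - 1) 0

/-- Product of `N` i.i.d. uniform distributions on `[0,1]`. -/
noncomputable def unifPi (N : ℕ) : Measure (Fin N → ℝ) :=
  Measure.pi fun _ => volume.restrict (Icc (0:ℝ) 1)

/-- The Beta(r, N-r+1) distribution: the law of the `r`-th order statistic of
`N` i.i.d. uniform random variables on `[0,1]`. -/
noncomputable def betaOS (N r : ℕ) : Measure ℝ :=
  Measure.map (fun u => orderStat u r) (unifPi N)

/-- The cdf of the Beta(r, N-r+1) distribution (cdf of `U_(r:N)`). -/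
noncomputable def betaCDF (N r : ℕ) (t : ℝ) : ℝ := (betaOS N r (Iic t)).toReal

/-- Generalized inverse (quantile function) of a cdf. -/
noncomputable def genInv (F : ℝ → ℝ) (p : ℝ) : ℝ := sInf {x | p ≤ F x}

/-- Quantile function of the Beta(r, N-r+1) distribution. -/
noncomputable def betaQuantile (N r : ℕ) (p : ℝ) : ℝ := genInv (betaCDF N r) p

/-- Quantile-of-quantiles: the `k`-th smallest of the `m` within-group `ℓ`-th
order statistics of an `n × m` array. -/
noncomputable def qqStat {n m : ℕ} (ℓ k : ℕ) (Z : Fin n → Fin m → ℝ) : ℝ :=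
  orderStat (fun j => orderStat (fun i => Z i j) ℓ) k

/-- Product of `n × m` i.i.d. uniform distributions on `[0,1]`. -/
noncomputable def unifPi2 (n m : ℕ) : Measure (Fin n → Fin m → ℝ) :=
  Measure.pi fun _ => Measure.pi fun _ => volume.restrict (Icc (0:ℝ) 1)

/-- The law of `U_(ℓ:n, k:m)`, the `k`-th order statistic of the `m` within-group
`ℓ`-th order statistics of an `n × m` array of i.i.d. uniform variables
(equivalently, of `m` i.i.d. Beta(ℓ, n-ℓ+1) variables). -/
noncomputable def betaBetaOS (n m ℓ k : ℕ) : Measure ℝ :=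
  Measure.map (qqStat ℓ k) (unifPi2 n m)

/-- The auxiliary function `g(t) = sup_{δ ∈ (0, min{t,1-t})} (t-δ)/√(log(1/δ))`. -/
noncomputable def gFun (t : ℝ) : ℝ :=
  sSup ((fun δ => (t - δ) / Real.sqrt (Real.log (1/δ))) '' Ioo 0 (min t (1 - t)))

/-- The cdf of the Poisson-Binomial distribution with parameter vector `u`,
evaluated at the integer `r`. -/
noncomputable def pbCDF {m : ℕ} (u : Fin m → ℝ) (r : ℕ) : ℝ :=
  ∑ A ∈ Finset.univ.powerset.filter (fun A : Finset (Fin m) => A.card ≤ r),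
    (∏ j ∈ A, u j) * ∏ j ∈ Aᶜ, (1 - u j)

open Finset

theorem List.Pairwise.getElem_mem_iff_lt_countP {α : Type*} [Preorder α] {l : List α}
    (hl : l.Pairwise (· ≤ ·)) {s : Set α} (hs : IsLowerSet s) [DecidablePred (· ∈ s)]
    {k : ℕ} (hk : k < l.length) : l[k] ∈ s ↔ k < l.countP (· ∈ s) := by
  induction l generalizing k with
  | nil => simp at hk
  | cons a t ih =>
    rw [List.pairwise_cons] at hl
    have head_mem : ∀ x ∈ t, x ∈ s → a ∈ s := fun x hx hxs => hs (hl.1 x hx) hxs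
    rw [List.countP_cons]
    cases k with
    | zero =>
      by_cases ha : a ∈ s
      · simp [ha]
      · simpa [ha, List.countP_eq_zero] using fun x hx hxs => ha (head_mem x hx hxs)
    | succ k =>
      have hk' : k < t.length := by simpa using hk
      simp only [List.getElem_cons_succ]
      rw [ih hl.2 hk']
      by_cases ha : a ∈ s
      · simp [ha]
      · have : ¬ k < t.countP (· ∈ s) := fun h =>
          ha (head_mem _ (List.getElem_mem hk') ((ih hl.2 hk').2 h))
        simp only [ha, decide_false, Bool.false_eq_true, ↓reduceIte, add_zero]
        omega

theorem orderStat_mem_iff_le_card {N : ℕ} (S : Fin N → ℝ) {r : ℕ} (hr1 : 1 ≤ r) (hrN : r ≤ N)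
    {s : Set ℝ} (hs : IsLowerSet s) [DecidablePred (· ∈ s)] :
    orderStat S r ∈ s ↔ r ≤ #{i | S i ∈ s} := by
  set l := (Multiset.ofList (List.ofFn S)).sort (· ≤ ·)
  have hlen : l.length = N := by simp [l]
  have hk : r - 1 < l.length := by omega
  have hcount : l.countP (· ∈ s) = #{i | S i ∈ s} := by
    rw [(Multiset.coe_eq_coe.mp (Multiset.sort_eq _ _)).countP_eq, List.ofFn_eq_map,
      ← Multiset.coe_countP, ← Multiset.map_coe, Multiset.countP_map, Finset.card,
      Finset.filter_val, Fin.univ_def]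
  rw [orderStat, List.getD_eq_getElem l 0 hk,
    (Multiset.pairwise_sort _ _).getElem_mem_iff_lt_countP hs hk, hcount]
  omega

theorem orderStat_mem_iff_le_card_of_isUpperSet {N : ℕ} (S : Fin N → ℝ) {r : ℕ} (hr1 : 1 ≤ r)
    (hrN : r ≤ N) {s : Set ℝ} (hs : IsUpperSet s) [DecidablePred (· ∈ s)] :
    orderStat S r ∈ s ↔ N + 1 ≤ r + #{i | S i ∈ s} := by
  have hcompl := orderStat_mem_iff_le_card S hr1 hrN hs.compl
  have hcard : #{i | S i ∈ s} + #{i | S i ∈ sᶜ} = N := by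
    simpa using Finset.card_filter_add_card_filter_not (s := univ) (fun i => S i ∈ s)
  rw [← not_iff_not, ← mem_compl_iff, hcompl]
  omega

theorem measureReal_card_ge_le_of_iIndepFun {Ω α ι : Type*} [MeasurableSpace Ω] [MeasurableSpace α]
    [Fintype ι] {μ : Measure Ω} [IsProbabilityMeasure μ] {Z : ι → Ω → α}
    (hZ : ∀ i, Measurable (Z i)) (hindep : iIndepFun Z μ) {ν : Measure α}
    (hlaw : ∀ i, μ.map (Z i) = ν) {s : Set α} (hs : MeasurableSet s) [DecidablePred (· ∈ s)]
    {t : ℝ} (ht : 0 ≤ t) :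
    μ.real {ω | Fintype.card ι * ν.real s + t ≤ #{i | Z i ω ∈ s}}
      ≤ Real.exp (-2 * t ^ 2 / Fintype.card ι) := by
  set X : ι → Ω → ℝ := fun i ω => s.indicator 1 (Z i ω) - ν.real s
  have hmean : ∀ i, ∫ ω, s.indicator (1 : α → ℝ) (Z i ω) ∂μ = ν.real s := fun i => by
    rw [← hlaw i, ← integral_indicator_one hs,
      integral_map (hZ i).aemeasurable ((measurable_one.indicator hs).aestronglyMeasurable)]
  have hsubG : ∀ i, HasSubgaussianMGF (X i) (1 / 4) μ := fun i => by
    have h := hasSubgaussianMGF_of_mem_Icc (μ := μ) (X := fun ω => s.indicator 1 (Z i ω))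
      (a := 0) (b := 1)
      ((measurable_one.indicator hs).comp (hZ i)).aemeasurable
      (ae_of_all _ fun ω => ⟨indicator_nonneg (fun _ _ => zero_le_one) _,
        indicator_le_self' (fun _ _ => zero_le_one) _⟩)
    rw [hmean] at h
    convert h
    norm_num
  have hindepX : iIndepFun X μ :=
    hindep.comp (fun _ x => s.indicator 1 x - ν.real s)
      fun _ => (measurable_one.indicator hs).sub_const _
  have hsum : ∀ ω, ∑ i, X i ω = #{i | Z i ω ∈ s} - Fintype.card ι * ν.real s := fun ω => by
    simp [X, Finset.sum_sub_distrib, Set.indicator_apply, Finset.sum_boole]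
  convert HasSubgaussianMGF.measure_sum_ge_le_of_iIndepFun hindepX (s := univ)
    (fun i _ => hsubG i) ht using 2
  · ext ω
    simp only [mem_ofPred_eq, hsum]
    constructor <;> intro h <;> linarith
  · simp only [sum_const, card_univ, nsmul_eq_mul]
    push_cast
    ring

theorem measure_le_ofReal_of_cdf_le (ν : Measure ℝ) [IsProbabilityMeasure ν] {A : Set ℝ}
    (hA : MeasurableSet A) {τ : ℝ} (h : ∀ x ∈ A, cdf ν x ≤ τ) : ν A ≤ ENNReal.ofReal τ := by
  rw [hA.measure_eq_iSup_isCompact]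
  refine iSup₂_le fun K hKA => iSup_le fun hK => ?_
  rcases K.eq_empty_or_nonempty with rfl | hne
  · simp
  have hmax := hK.sSup_mem hne
  calc ν K ≤ ν (Iic (sSup K)) := measure_mono fun x hx => le_csSup hK.bddAbove hx
    _ = ENNReal.ofReal (cdf ν (sSup K)) := (ofReal_cdf ν _).symm
    _ ≤ ENNReal.ofReal τ := ENNReal.ofReal_le_ofReal (h _ (hKA hmax))

theorem measure_lt_cdf_le_of_continuous (ν : Measure ℝ) [IsProbabilityMeasure ν]
    (hc : Continuous (cdf ν)) {τ : ℝ} (h0 : 0 < τ) (h1 : τ < 1) :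
    ν {x | τ < cdf ν x} ≤ ENNReal.ofReal (1 - τ) := by
  obtain ⟨z, hz⟩ : τ ∈ range (cdf ν) := mem_range_of_exists_le_of_exists_ge hc
    ((tendsto_cdf_atBot ν).eventually (eventually_le_nhds h0)).exists
    ((tendsto_cdf_atTop ν).eventually (eventually_ge_nhds h1)).exists
  calc ν {x | τ < cdf ν x} ≤ ν (Iic z)ᶜ := measure_mono fun x hx hxz =>
        (not_le.2 hx) (hz ▸ (cdf ν).mono hxz)
    _ = ENNReal.ofReal (1 - τ) := by
      rw [prob_compl_eq_one_sub measurableSet_Iic, ← ofReal_cdf, hz,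
        ENNReal.ofReal_sub _ h0.le, ENNReal.ofReal_one]

theorem ofReal_one_sub_le_measure_of_compl_le {Ω : Type*} [MeasurableSpace Ω] {μ : Measure Ω}
    [IsProbabilityMeasure μ] {A : Set Ω} {δ : ℝ} (hδ : 0 ≤ δ) (h : μ Aᶜ ≤ ENNReal.ofReal δ) :
    ENNReal.ofReal (1 - δ) ≤ μ A := by
  rw [ENNReal.ofReal_sub _ hδ, ENNReal.ofReal_one, tsub_le_iff_right]
  calc 1 = μ (A ∪ Aᶜ) := by rw [union_compl_self, measure_univ]
    _ ≤ μ A + μ Aᶜ := measure_union_le _ _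
    _ ≤ μ A + ENNReal.ofReal δ := by gcongr

theorem exp_neg_two_mul_sq_div_le {N : ℕ} (hN : 0 < N) (ε : ℝ) :
    Real.exp (-2 * ((N + 1) * ε) ^ 2 / N) ≤ Real.exp (-2 * (N + 2) * ε ^ 2) := by
  have hN' : (0 : ℝ) < N := by exact_mod_cast hN
  rw [Real.exp_le_exp, div_le_iff₀ hN']
  nlinarith [sq_nonneg ε]

section OrderStatTails

variable {Ω : Type*} [MeasurableSpace Ω] {μ : Measure Ω} [IsProbabilityMeasure μ] {N : ℕ}
  {Z : Fin N → Ω → ℝ} {ν : Measure ℝ}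

theorem measure_card_ge_le_of_iIndepFun (hZ : ∀ i, Measurable (Z i)) (hindep : iIndepFun Z μ)
    (hlaw : ∀ i, μ.map (Z i) = ν) (hN : 0 < N) {s : Set ℝ} (hs : MeasurableSet s)
    [DecidablePred (· ∈ s)] {ε : ℝ} (hε : 0 ≤ ε) :
    μ {ω | N * ν.real s + (N + 1) * ε ≤ #{i | Z i ω ∈ s}}
      ≤ ENNReal.ofReal (Real.exp (-2 * (N + 2) * ε ^ 2)) := by
  rw [← ofReal_measureReal]
  refine ENNReal.ofReal_le_ofReal ((exp_neg_two_mul_sq_div_le hN ε).trans' ?_)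
  simpa only [Fintype.card_fin] using
    measureReal_card_ge_le_of_iIndepFun hZ hindep hlaw hs (t := (N + 1) * ε) (by positivity)

theorem measure_cdf_orderStat_lt_le [IsProbabilityMeasure ν] (hZ : ∀ i, Measurable (Z i))
    (hindep : iIndepFun Z μ) (hlaw : ∀ i, μ.map (Z i) = ν) {r : ℕ} (hr1 : 1 ≤ r) (hrN : r ≤ N)
    {ε : ℝ} (hε : 0 ≤ ε) :
    μ {ω | cdf ν (orderStat (Z · ω) r) < r / (N + 1) - ε}
      ≤ ENNReal.ofReal (Real.exp (-2 * (N + 2) * ε ^ 2)) := by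
  classical
  set τ : ℝ := r / (N + 1) - ε
  rcases lt_or_ge τ 0 with hτ0 | hτ0
  · have hempty : {ω | cdf ν (orderStat (Z · ω) r) < τ} = ∅ :=
      eq_empty_of_forall_notMem fun ω hω => (cdf_nonneg ν _).not_gt (hω.trans hτ0)
    simp [hempty]
  set s := {x | cdf ν x < τ}
  have hs_lower : IsLowerSet s := fun x y hxy hy => ((cdf ν).mono hxy).trans_lt hy
  have hs : MeasurableSet s := measurableSet_lt (cdf ν).mono.measurable measurable_const
  have hνs : ν.real s ≤ τ := ENNReal.toReal_le_of_le_ofReal hτ0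
    (measure_le_ofReal_of_cdf_le ν hs fun x hx => le_of_lt hx)
  refine (measure_mono fun ω (hω : orderStat (Z · ω) r ∈ s) => ?_).trans
    (measure_card_ge_le_of_iIndepFun hZ hindep hlaw (by omega) hs hε)
  have hcard := (orderStat_mem_iff_le_card _ hr1 hrN hs_lower).1 hω
  have hr : (r : ℝ) = (N + 1) * (r / (N + 1)) := by field_simp
  have : (N : ℝ) * ν.real s ≤ N * τ := mul_le_mul_of_nonneg_left hνs (Nat.cast_nonneg N)
  change (N : ℝ) * ν.real s + (N + 1) * ε ≤ _
  calc (N : ℝ) * ν.real s + (N + 1) * ε ≤ r := by nlinarith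
    _ ≤ _ := by exact_mod_cast hcard

theorem measure_lt_cdf_orderStat_le [IsProbabilityMeasure ν] (hZ : ∀ i, Measurable (Z i))
    (hindep : iIndepFun Z μ) (hlaw : ∀ i, μ.map (Z i) = ν) (hc : Continuous (cdf ν)) {r : ℕ}
    (hr1 : 1 ≤ r) (hrN : r ≤ N) {ε : ℝ} (hε : 0 ≤ ε) :
    μ {ω | r / (N + 1) + ε < cdf ν (orderStat (Z · ω) r)}
      ≤ ENNReal.ofReal (Real.exp (-2 * (N + 2) * ε ^ 2)) := by
  classical
  set τ : ℝ := r / (N + 1) + ε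
  rcases le_or_gt 1 τ with hτ1 | hτ1
  · have hempty : {ω | τ < cdf ν (orderStat (Z · ω) r)} = ∅ :=
      eq_empty_of_forall_notMem fun ω hω => (cdf_le_one ν _).not_gt (hτ1.trans_lt hω)
    simp [hempty]
  have hN : (0 : ℝ) < N + 1 := by positivity
  have hτ0 : 0 < τ := by
    have : (0 : ℝ) < r / (N + 1) := div_pos (by exact_mod_cast hr1) hN
    linarith
  set U := {x | τ < cdf ν x}
  have hU_upper : IsUpperSet U := fun x y hxy hx => hx.trans_le ((cdf ν).mono hxy)
  have hU : MeasurableSet U := measurableSet_lt measurable_const (cdf ν).mono.measurable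
  have hνU : ν.real U ≤ 1 - τ := ENNReal.toReal_le_of_le_ofReal (by linarith)
    (measure_lt_cdf_le_of_continuous ν hc hτ0 hτ1)
  refine (measure_mono fun ω (hω : orderStat (Z · ω) r ∈ U) => ?_).trans
    (measure_card_ge_le_of_iIndepFun hZ hindep hlaw (by omega) hU hε)
  have hcard := (orderStat_mem_iff_le_card_of_isUpperSet _ hr1 hrN hU_upper).1 hω
  have hr : (r : ℝ) = (N + 1) * (r / (N + 1)) := by field_simp
  have : (N : ℝ) * ν.real U ≤ N * (1 - τ) := mul_le_mul_of_nonneg_left hνU (Nat.cast_nonneg N)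
  change (N : ℝ) * ν.real U + (N + 1) * ε ≤ _
  have hcard' : (N : ℝ) + 1 ≤ r + #{i | Z i ω ∈ U} := by exact_mod_cast hcard
  nlinarith

end OrderStatTails

/-- For `Z₁,…,Z_N` i.i.d. with cdf `F`,
`P(F(Z_(r:N)) ≥ r/(N+1) - √(log(1/δ)/(2(N+2)))) ≥ 1-δ`, and if `F` is continuous also
`P(F(Z_(r:N)) ≤ r/(N+1) + √(log(1/δ)/(2(N+2)))) ≥ 1-δ`. -/
theorem orderStat_cdf_concentration {Ω : Type*} [MeasurableSpace Ω]
    (μ : Measure Ω) [IsProbabilityMeasure μ]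
    {N : ℕ} (r : ℕ) (hr1 : 1 ≤ r) (hrN : r ≤ N) (δ : ℝ) (hδ : 0 < δ)
    (Z : Fin N → Ω → ℝ) (ν : Measure ℝ)
    (hZmeas : ∀ i, Measurable (Z i))
    (hZindep : iIndepFun Z μ)
    (hZlaw : ∀ i, Measure.map (Z i) μ = ν)
    (F : ℝ → ℝ) (hF : F = fun x => (ν (Iic x)).toReal) :
    ENNReal.ofReal (1 - δ)
      ≤ μ {ω | (r : ℝ) / (N + 1) - Real.sqrt (Real.log (1/δ) / (2 * ((N : ℝ) + 2)))
            ≤ F (orderStat (fun i => Z i ω) r)}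
    ∧ (Continuous F →
        ENNReal.ofReal (1 - δ)
          ≤ μ {ω | F (orderStat (fun i => Z i ω) r)
              ≤ (r : ℝ) / (N + 1) + Real.sqrt (Real.log (1/δ) / (2 * ((N : ℝ) + 2)))}) := by
  by_cases hδ1 : 1 ≤ δ
  · rw [ENNReal.ofReal_eq_zero.2 (by linarith)]
    exact ⟨zero_le, fun _ => zero_le⟩
  have hN : 0 < N := by omega
  have : IsProbabilityMeasure ν :=
    hZlaw ⟨0, hN⟩ ▸ Measure.isProbabilityMeasure_map (hZmeas _).aemeasurable
  obtain rfl : F = cdf ν := hF.trans (funext fun x => (cdf_eq_real ν x).symm)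
  set ε := Real.sqrt (Real.log (1 / δ) / (2 * ((N : ℝ) + 2)))
  have hδ_eq : Real.exp (-2 * (N + 2) * ε ^ 2) = δ := by
    have hlog : 0 ≤ Real.log (1 / δ) := Real.log_nonneg (by rw [le_div_iff₀ hδ]; linarith)
    rw [Real.sq_sqrt (by positivity), one_div, Real.log_inv]
    field_simp
    exact Real.exp_log hδ
  refine ⟨?_, fun hc => ?_⟩ <;> refine ofReal_one_sub_le_measure_of_compl_le hδ.le ?_ <;>
    simp only [compl_ofPred, not_le] <;> rw [← hδ_eq]
  · exact measure_cdf_orderStat_lt_le hZmeas hZindep hZlaw hr1 hrN (Real.sqrt_nonneg _)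
  · exact measure_lt_cdf_orderStat_le hZmeas hZindep hZlaw hc hr1 hrN (Real.sqrt_nonneg _)
end

section
/- In the one-shot federated setting with m agents each holding n i.i.d. calibration scores, for any (ℓ,k) ∈ {1,…,n}×{1,…,m} and β ∈ (0,1), the conditional coverage 1 − α_{ℓ,k}(D) := P(Y ∈ Ĉ_{ℓ,k}(X) | D) satisfies P(1 − α_{ℓ,k}(D) ≥ F_{U_(ℓ:n)}⁻¹(F_{U_(k:m)}⁻¹(β))) ≥ 1 − β, with equality when the scores are almost surely distinct. -/
open MeasureTheory ProbabilityTheory Set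

/-! With `F` the cdf of the scores and `q ∈ (0,1)`, `F s < q` iff `s < c := F⁻¹(q)`, and
`ν (-∞, c) ≤ q`, with equality when `ν` has no atoms. An order statistic `S_(r)` of a sample lies
below `c` iff at least `r` sample points do, so by independence
`P(F(S_(ℓ,k)) < q) = H_{m,k}(H_{n,ℓ}(ν (-∞, c)))`, where `H_{N,r}(p)` is the probability that a
Binomial(N, p) variable is at least `r`. On `[0,1]`, `H_{N,r}` is increasing and is the cdf of
`U_(r:N)`, hence inverts its quantile function; for `q = F_{U_(ℓ:n)}⁻¹(F_{U_(k:m)}⁻¹(β))` the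
probability is therefore at most `H_{m,k}(H_{n,ℓ}(q)) = β`, with equality in the atomless case.
Almost surely distinct scores rule out atoms, since two independent copies would tie on one. -/

open scoped Classical
open Finset

section AtLeast

variable {ι α : Type*} [Fintype ι]

def atLeast (r : ℕ) (E : Set α) : Set (ι → α) :=
  {x | r ≤ #{i | x i ∈ E}}

theorem setOf_filter_mem_eq_pi (E : Set α) (A : Finset ι) :
    {x : ι → α | ({i | x i ∈ E} : Finset ι) = A} = univ.pi fun i => if i ∈ A then E else Eᶜ := by
  ext x
  simp only [Set.mem_pi, Set.mem_univ, true_implies, Finset.ext_iff, mem_filter, Finset.mem_univ,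
    true_and]
  refine forall_congr' fun i => ?_
  by_cases hi : i ∈ A <;> simp [hi]

theorem atLeast_eq_biUnion (r : ℕ) (E : Set α) :
    (atLeast r E : Set (ι → α))
      = ⋃ A ∈ ({A | r ≤ #A} : Finset (Finset ι)), {x | ({i | x i ∈ E} : Finset ι) = A} := by
  ext x
  simp [atLeast]

variable [MeasurableSpace α]

theorem measurableSet_setOf_filter_mem_eq {E : Set α} (hE : MeasurableSet E) (A : Finset ι) :
    MeasurableSet {x : ι → α | ({i | x i ∈ E} : Finset ι) = A} := by
  rw [setOf_filter_mem_eq_pi]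
  exact .univ_pi fun i => by split_ifs <;> simp [hE]

theorem measurableSet_atLeast (r : ℕ) {E : Set α} (hE : MeasurableSet E) :
    MeasurableSet (atLeast r E : Set (ι → α)) := by
  rw [atLeast_eq_biUnion]
  exact Finset.measurableSet_biUnion _ fun A _ => measurableSet_setOf_filter_mem_eq hE A

end AtLeast

section BinomialTail

def binomialTail (N r : ℕ) (p : ℝ) : ℝ :=
  ∑ A : Finset (Fin N) with r ≤ #A, p ^ #A * (1 - p) ^ (N - #A)

theorem measureReal_pi_atLeast {α : Type*} [MeasurableSpace α] {N : ℕ} (r : ℕ)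
    (ρ : Measure α) [IsProbabilityMeasure ρ] {E : Set α} (hE : MeasurableSet E) :
    (Measure.pi fun _ : Fin N => ρ).real (atLeast r E) = binomialTail N r (ρ.real E) := by
  have hdisj : (({A | r ≤ #A} : Finset (Finset (Fin N))) : Set (Finset (Fin N))).PairwiseDisjoint
      fun A => {x : Fin N → α | ({i | x i ∈ E} : Finset (Fin N)) = A} :=
    pairwiseDisjoint_fiber _ _
  rw [atLeast_eq_biUnion, measureReal_biUnion_finset hdisj
    fun A _ => measurableSet_setOf_filter_mem_eq hE A]
  refine sum_congr rfl fun A _ => ?_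
  rw [setOf_filter_mem_eq_pi, measureReal_def, Measure.pi_pi, ENNReal.toReal_prod]
  simp_rw [apply_ite, ← measureReal_def, probReal_compl_eq_one_sub hE]
  simp [prod_ite, filter_not, card_univ_sdiff]

variable {N r : ℕ}

theorem continuous_binomialTail : Continuous (binomialTail N r) := by
  unfold binomialTail
  fun_prop

theorem binomialTail_zero (hr : 1 ≤ r) : binomialTail N r 0 = 0 :=
  sum_eq_zero fun A hA => by
    rw [zero_pow (by simp at hA; omega), zero_mul]

theorem binomialTail_one (hrN : r ≤ N) : binomialTail N r 1 = 1 := by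
  rw [binomialTail, sum_eq_single_of_mem Finset.univ (by simpa using hrN)]
  · simp
  · intro A _ hA
    have : #A < N := by simpa using Finset.card_lt_card (ssubset_univ_iff.2 hA)
    rw [sub_self, zero_pow (by omega), mul_zero]

instance : IsProbabilityMeasure (volume.restrict (Icc (0:ℝ) 1)) := ⟨by simp⟩

instance (N : ℕ) : IsProbabilityMeasure (unifPi N) := by
  unfold unifPi
  infer_instance

theorem measureReal_uniform_Iic (t : ℝ) :
    (volume.restrict (Icc (0:ℝ) 1)).real (Iic t) = projIcc 0 1 zero_le_one t := by
  have : Iic t ∩ Icc (0:ℝ) 1 = Icc 0 (min 1 t) := by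
    rw [inter_comm, ← Ici_inter_Iic, inter_assoc, Iic_inter_Iic, Ici_inter_Iic]
  rw [measureReal_restrict_apply measurableSet_Iic, this, Real.volume_real_Icc, coe_projIcc,
    sub_zero, max_comm]

theorem binomialTail_eq_unifPi {p : ℝ} (hp : p ∈ Icc (0:ℝ) 1) :
    binomialTail N r p = (unifPi N).real (atLeast r (Iic p)) := by
  rw [unifPi, measureReal_pi_atLeast r _ measurableSet_Iic, measureReal_uniform_Iic,
    projIcc_of_mem _ hp]

theorem monotoneOn_binomialTail : MonotoneOn (binomialTail N r) (Icc 0 1) := by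
  intro p hp p' hp' hpp'
  rw [binomialTail_eq_unifPi hp, binomialTail_eq_unifPi hp']
  refine measureReal_mono fun x hx => hx.trans (card_le_card fun i hi => ?_)
  simp only [mem_filter, Finset.mem_univ, true_and, Set.mem_Iic] at hi ⊢
  exact hi.trans hpp'

theorem binomialTail_mem_Icc {p : ℝ} (hp : p ∈ Icc (0:ℝ) 1) :
    binomialTail N r p ∈ Icc (0:ℝ) 1 := by
  rw [binomialTail_eq_unifPi hp]
  exact ⟨measureReal_nonneg, measureReal_le_one⟩

end BinomialTail

section OrderStatistics

theorem card_filter_eq_countP_ofFn {α : Type*} {N : ℕ} (S : Fin N → α) (p : α → Prop)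
    [DecidablePred p] : #{i | p (S i)} = Multiset.countP p (List.ofFn S) := by
  rw [← Fin.univ_val_map, Multiset.countP_map]
  rfl

theorem List.Pairwise.get_mem_iff_lt_card_filter {α : Type*} [Preorder α] {l : List α}
    (hl : l.Pairwise (· ≤ ·)) {A : Set α} (hA : IsLowerSet A) (j : Fin l.length) :
    l.get j ∈ A ↔ (j : ℕ) < #{i | l.get i ∈ A} := by
  constructor
  · intro hj
    calc (j : ℕ) < #(Iic j) := by simp
      _ ≤ _ := Finset.card_le_card fun i hi =>
        Finset.mem_filter.2 ⟨Finset.mem_univ _, hA (hl.rel_get_of_le (Finset.mem_Iic.1 hi)) hj⟩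
  · intro hlt
    by_contra hj
    have : #{i | l.get i ∈ A} ≤ #(Iio j) := Finset.card_le_card fun i hi => Finset.mem_Iio.2
      (lt_of_not_ge fun hji => hj (hA (hl.rel_get_of_le hji) (Finset.mem_filter.1 hi).2))
    rw [Fin.card_Iio] at this
    omega

variable {N r : ℕ}

theorem orderStat_mem_iff (S : Fin N → ℝ) (hr : 1 ≤ r) (hrN : r ≤ N) {A : Set ℝ}
    (hA : IsLowerSet A) : orderStat S r ∈ A ↔ S ∈ atLeast r A := by
  set l := (Multiset.ofList (List.ofFn S)).sort (· ≤ ·)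
  have hlen : l.length = N := by simp [l]
  have hcount : #{i | l.get i ∈ A} = #{i | S i ∈ A} := by
    rw [card_filter_eq_countP_ofFn S (· ∈ A), card_filter_eq_countP_ofFn l.get (· ∈ A),
      List.ofFn_get, Multiset.sort_eq]
  rw [orderStat, List.getD_eq_get l 0 (i := ⟨r - 1, by omega⟩),
    (Multiset.pairwise_sort _ _).get_mem_iff_lt_card_filter hA, hcount]
  change r - 1 < _ ↔ r ≤ _
  omega

theorem qqStat_mem_iff {n m ℓ k : ℕ} (hℓ : 1 ≤ ℓ) (hℓn : ℓ ≤ n) (hk : 1 ≤ k) (hkm : k ≤ m)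
    {A : Set ℝ} (hA : IsLowerSet A) (Z : Fin n → Fin m → ℝ) :
    qqStat ℓ k Z ∈ A ↔ (fun j i => Z i j) ∈ atLeast k (atLeast ℓ A) := by
  rw [qqStat, orderStat_mem_iff _ hk hkm hA]
  simp only [atLeast, Set.mem_ofPred_eq, orderStat_mem_iff _ hℓ hℓn hA]

theorem preimage_orderStat_Iic (hr : 1 ≤ r) (hrN : r ≤ N) (t : ℝ) :
    (fun S : Fin N → ℝ => orderStat S r) ⁻¹' Iic t = atLeast r (Iic t) :=
  Set.ext fun S => orderStat_mem_iff S hr hrN (isLowerSet_Iic t)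

theorem measurable_orderStat (hr : 1 ≤ r) (hrN : r ≤ N) :
    Measurable fun S : Fin N → ℝ => orderStat S r :=
  measurable_of_Iic fun t => by
    rw [preimage_orderStat_Iic hr hrN]
    exact measurableSet_atLeast r measurableSet_Iic

end OrderStatistics

section BetaQuantile

variable {N r : ℕ}

theorem betaCDF_eq_binomialTail (hr : 1 ≤ r) (hrN : r ≤ N) (t : ℝ) :
    betaCDF N r t = binomialTail N r (projIcc 0 1 zero_le_one t) := by
  rw [betaCDF, betaOS, Measure.map_apply (measurable_orderStat hr hrN) measurableSet_Iic,
    preimage_orderStat_Iic hr hrN, ← measureReal_def, unifPi,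
    measureReal_pi_atLeast r _ measurableSet_Iic, measureReal_uniform_Iic]

theorem betaCDF_of_nonpos (hr : 1 ≤ r) (hrN : r ≤ N) {t : ℝ} (ht : t ≤ 0) : betaCDF N r t = 0 := by
  rw [betaCDF_eq_binomialTail hr hrN, projIcc_of_le_left _ ht, binomialTail_zero hr]

theorem betaCDF_of_one_le (hr : 1 ≤ r) (hrN : r ≤ N) {t : ℝ} (ht : 1 ≤ t) : betaCDF N r t = 1 := by
  rw [betaCDF_eq_binomialTail hr hrN, projIcc_of_right_le _ ht, binomialTail_one hrN]

theorem continuous_betaCDF (hr : 1 ≤ r) (hrN : r ≤ N) : Continuous (betaCDF N r) := by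
  rw [funext (betaCDF_eq_binomialTail hr hrN)]
  exact continuous_binomialTail.comp (continuous_subtype_val.comp continuous_projIcc)

instance : IsFiniteMeasure (betaOS N r) := by
  unfold betaOS
  infer_instance

theorem monotone_betaCDF : Monotone (betaCDF N r) := fun _ _ hst =>
  measureReal_mono (Iic_subset_Iic.2 hst)

theorem apply_genInv_eq {H : ℝ → ℝ} (hH : Continuous H) (hmono : Monotone H) {b x₀ : ℝ}
    (hx₀ : H x₀ = b) (hbdd : BddBelow {x | b ≤ H x}) : H (genInv H b) = b :=
  le_antisymm ((hmono (csInf_le hbdd hx₀.ge)).trans_eq hx₀)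
    ((isClosed_le continuous_const hH).csInf_mem ⟨x₀, hx₀.ge⟩ hbdd)

theorem betaCDF_betaQuantile (hr : 1 ≤ r) (hrN : r ≤ N) {b : ℝ} (hb : b ∈ Ioo (0:ℝ) 1) :
    betaCDF N r (betaQuantile N r b) = b := by
  obtain ⟨x₀, -, hx₀⟩ := intermediate_value_Icc zero_le_one (continuous_betaCDF hr hrN).continuousOn
    ⟨(betaCDF_of_nonpos hr hrN le_rfl).trans_le hb.1.le,
      hb.2.le.trans_eq (betaCDF_of_one_le hr hrN le_rfl).symm⟩
  refine apply_genInv_eq (continuous_betaCDF hr hrN) monotone_betaCDF hx₀ ⟨0, fun x hx => ?_⟩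
  by_contra! hx0
  exact hb.1.not_ge (hx.out.trans (betaCDF_of_nonpos hr hrN hx0.le).le)

theorem betaQuantile_mem_Ioo (hr : 1 ≤ r) (hrN : r ≤ N) {b : ℝ} (hb : b ∈ Ioo (0:ℝ) 1) :
    betaQuantile N r b ∈ Ioo (0:ℝ) 1 := by
  have h := betaCDF_betaQuantile hr hrN hb
  constructor
  · by_contra! h0
    exact hb.1.ne' (h.symm.trans (betaCDF_of_nonpos hr hrN h0))
  · by_contra! h1
    exact hb.2.ne (h.symm.trans (betaCDF_of_one_le hr hrN h1))

theorem binomialTail_betaQuantile (hr : 1 ≤ r) (hrN : r ≤ N) {b : ℝ} (hb : b ∈ Ioo (0:ℝ) 1) :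
    binomialTail N r (betaQuantile N r b) = b := by
  have h := betaCDF_betaQuantile hr hrN hb
  rwa [betaCDF_eq_binomialTail hr hrN,
    projIcc_of_mem _ (Ioo_subset_Icc_self (betaQuantile_mem_Ioo hr hrN hb))] at h

end BetaQuantile

section CDF

variable (ν : Measure ℝ) {q : ℝ}

theorem genInv_cdf_le_iff (hq : q ∈ Ioo (0:ℝ) 1) (x : ℝ) :
    genInv (cdf ν) q ≤ x ↔ q ≤ cdf ν x := by
  set S := {x | q ≤ cdf ν x}
  have hne : S.Nonempty :=
    (((tendsto_order.1 (tendsto_cdf_atTop ν)).1 q hq.2).mono fun _ h => h.le).exists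
  have hbdd : BddBelow S := by
    obtain ⟨a, ha⟩ := Filter.eventually_atBot.1 ((tendsto_order.1 (tendsto_cdf_atBot ν)).2 q hq.1)
    exact ⟨a, fun x hx => le_of_not_gt fun hxa => (ha x hxa.le).not_ge hx⟩
  -- right-continuity of the cdf puts the infimum in `S`
  have hmem : sInf S ∈ S := by
    refine ge_of_tendsto (((cdf ν).right_continuous _).mono Ioi_subset_Ici_self) ?_
    filter_upwards [self_mem_nhdsWithin] with x hx
    obtain ⟨y, hyS, hyx⟩ := exists_lt_of_csInf_lt hne hx
    exact hyS.trans (monotone_cdf ν hyx.le)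
  exact ⟨fun h => hmem.trans (monotone_cdf ν h), fun h => csInf_le hbdd h⟩

variable [IsProbabilityMeasure ν]

theorem measureReal_Iio_genInv_cdf_le (hq : q ∈ Ioo (0:ℝ) 1) :
    ν.real (Iio (genInv (cdf ν) q)) ≤ q := by
  have h := (cdf ν).measure_Iio (tendsto_cdf_atBot ν) (genInv (cdf ν) q)
  rw [measure_cdf, sub_zero] at h
  rw [measureReal_def, h]
  refine ENNReal.toReal_le_of_le_ofReal hq.1.le
    (ENNReal.ofReal_le_ofReal (le_of_tendsto ((monotone_cdf ν).tendsto_leftLim _) ?_))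
  filter_upwards [self_mem_nhdsWithin] with x hx
  exact (lt_of_not_ge fun h => hx.not_ge ((genInv_cdf_le_iff ν hq x).2 h)).le

theorem measureReal_Iio_genInv_cdf [NullSingletonClass ν] (hq : q ∈ Ioo (0:ℝ) 1) :
    ν.real (Iio (genInv (cdf ν) q)) = q := by
  refine le_antisymm (measureReal_Iio_genInv_cdf_le ν hq) ?_
  rw [measureReal_congr Iio_ae_eq_Iic, ← cdf_eq_real]
  exact (genInv_cdf_le_iff ν hq _).1 le_rfl

end CDF

section Independence

variable {Ω β : Type*} [MeasurableSpace Ω] [MeasurableSpace β] {μ : Measure Ω} {ν : Measure β}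

theorem map_curry_eq_pi_pi {ι κ : Type*} [Fintype ι] [Fintype κ] [IsProbabilityMeasure ν]
    {X : ι × κ → Ω → β} (hX : ∀ p, Measurable (X p)) (hind : iIndepFun X μ)
    (hlaw : ∀ p, μ.map (X p) = ν) :
    μ.map (fun ω i j => X (i, j) ω) = Measure.pi fun _ => Measure.pi fun _ => ν := by
  have := hind.isProbabilityMeasure
  have h := hind.map_fun_eq_pi_map fun p => (hX p).aemeasurable
  simp only [hlaw] at h
  have : (fun ω i j => X (i, j) ω) = MeasurableEquiv.curry ι κ β ∘ fun ω p => X p ω := rfl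
  rw [this, ← Measure.map_map (MeasurableEquiv.measurable _) (measurable_pi_lambda _ hX), h,
    ← Measure.infinitePi_eq_pi, Measure.infinitePi_map_curry (fun _ _ => ν)]
  simp only [Measure.infinitePi_eq_pi]

theorem nullSingletonClass_of_indepFun [MeasurableSingletonClass β] {X Y : Ω → β}
    (hX : Measurable X) (hY : Measurable Y) (hXY : IndepFun X Y μ) (hlawX : μ.map X = ν)
    (hlawY : μ.map Y = ν) (hdiag : μ {ω | X ω = Y ω} = 0) : NullSingletonClass ν := by
  refine ⟨fun x => ?_⟩
  have h := hXY.measure_inter_preimage_eq_mul {x} {x} (measurableSet_singleton x)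
    (measurableSet_singleton x)
  rw [← Measure.map_apply hX (measurableSet_singleton x), ← Measure.map_apply hY
    (measurableSet_singleton x), hlawX, hlawY] at h
  have hsub : X ⁻¹' {x} ∩ Y ⁻¹' {x} ⊆ {ω | X ω = Y ω} := fun ω hω => hω.1.trans hω.2.symm
  rw [← mul_self_eq_zero, ← h]
  exact measure_mono_null hsub hdiag

end Independence

theorem measureReal_setOf_le_qqStat {Ω : Type*} [MeasurableSpace Ω] {μ : Measure Ω} {ν : Measure ℝ}
    [IsProbabilityMeasure ν] {n m ℓ k : ℕ} (hℓ : 1 ≤ ℓ) (hℓn : ℓ ≤ n) (hk : 1 ≤ k) (hkm : k ≤ m)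
    {Z : Fin n × Fin m → Ω → ℝ} (hZ : ∀ p, Measurable (Z p)) (hind : iIndepFun Z μ)
    (hlaw : ∀ p, μ.map (Z p) = ν) (c : ℝ) :
    μ.real {ω | c ≤ qqStat ℓ k fun i j => Z (i, j) ω}
      = 1 - binomialTail m k (binomialTail n ℓ (ν.real (Iio c))) := by
  have := hind.isProbabilityMeasure
  let X : Ω → Fin m → Fin n → ℝ := fun ω j i => Z (i, j) ω
  have hX : Measurable X := measurable_pi_lambda _ fun _ => measurable_pi_lambda _ fun _ => hZ _
  have hB : MeasurableSet (atLeast k (atLeast ℓ (Iio c)) : Set (Fin m → Fin n → ℝ)) :=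
    measurableSet_atLeast k (measurableSet_atLeast ℓ measurableSet_Iio)
  have hset : {ω | c ≤ qqStat ℓ k fun i j => Z (i, j) ω} = (X ⁻¹' atLeast k (atLeast ℓ (Iio c)))ᶜ :=
    Set.ext fun ω => by
      rw [Set.mem_compl_iff, Set.mem_preimage, ← qqStat_mem_iff hℓ hℓn hk hkm (isLowerSet_Iio c),
        Set.mem_Iio, not_lt]
      rfl
  have hlawX : μ.map X = Measure.pi fun _ => Measure.pi fun _ => ν :=
    map_curry_eq_pi_pi (X := fun p : Fin m × Fin n => Z p.swap) (fun _ => hZ _)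
      (hind.precomp Prod.swap_injective) fun _ => hlaw _
  rw [hset, probReal_compl_eq_one_sub (hX hB), ← map_measureReal_apply hX hB, hlawX,
    measureReal_pi_atLeast k _ (measurableSet_atLeast ℓ measurableSet_Iio),
    measureReal_pi_atLeast ℓ _ measurableSet_Iio]

theorem conditional_coverage_qq_general {Ω : Type*} [MeasurableSpace Ω]
    (μ : Measure Ω) [IsProbabilityMeasure μ]
    {n m : ℕ}
    (ℓ k : ℕ) (hℓ1 : 1 ≤ ℓ) (hℓn : ℓ ≤ n) (hk1 : 1 ≤ k) (hkm : k ≤ m)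
    (β : ℝ) (hβ : β ∈ Ioo (0:ℝ) 1)
    (W : Option (Fin n × Fin m) → Ω → ℝ) (ν : Measure ℝ)
    (hmeas : ∀ a, Measurable (W a))
    (hindep : iIndepFun W μ)
    (hlaw : ∀ a, Measure.map (W a) μ = ν)
    (F : ℝ → ℝ) (hF : F = fun x => (ν (Iic x)).toReal)
    (coverage : Ω → ℝ)
    (hcov : coverage = fun ω => F (qqStat ℓ k (fun i j => W (some (i, j)) ω))) :
    ENNReal.ofReal (1 - β)
      ≤ μ {ω | betaQuantile n ℓ (betaQuantile m k β) ≤ coverage ω}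
    ∧ ((∀ a b : Option (Fin n × Fin m), a ≠ b → μ {ω | W a ω = W b ω} = 0) →
        (μ {ω | betaQuantile n ℓ (betaQuantile m k β) ≤ coverage ω}).toReal = 1 - β) := by
  subst hF hcov
  have : IsProbabilityMeasure ν :=
    hlaw none ▸ Measure.isProbabilityMeasure_map (hmeas none).aemeasurable
  have ht := betaQuantile_mem_Ioo hk1 hkm hβ
  have hq := betaQuantile_mem_Ioo hℓ1 hℓn ht
  set q := betaQuantile n ℓ (betaQuantile m k β)
  have htail : binomialTail m k (binomialTail n ℓ q) = β := by
    rw [binomialTail_betaQuantile hℓ1 hℓn ht, binomialTail_betaQuantile hk1 hkm hβ]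
  have hevent : {ω | q ≤ (ν (Iic (qqStat ℓ k fun i j => W (some (i, j)) ω))).toReal}
      = {ω | genInv (cdf ν) q ≤ qqStat ℓ k fun i j => W (some (i, j)) ω} := by
    simp_rw [genInv_cdf_le_iff ν hq, cdf_eq_real, measureReal_def]
  rw [hevent, ← ofReal_measureReal, ENNReal.toReal_ofReal measureReal_nonneg,
    measureReal_setOf_le_qqStat hℓ1 hℓn hk1 hkm (fun _ => hmeas _)
      (hindep.precomp (Option.some_injective _)) (fun _ => hlaw _)]
  refine ⟨ENNReal.ofReal_le_ofReal ?_, fun hdist => ?_⟩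
  · have hc : ν.real (Iio (genInv (cdf ν) q)) ∈ Icc (0:ℝ) 1 :=
      ⟨measureReal_nonneg, measureReal_le_one⟩
    have hq' := Ioo_subset_Icc_self hq
    have : binomialTail m k (binomialTail n ℓ (ν.real (Iio (genInv (cdf ν) q)))) ≤ β :=
      (monotoneOn_binomialTail (binomialTail_mem_Icc hc) (binomialTail_mem_Icc hq')
        (monotoneOn_binomialTail hc hq' (measureReal_Iio_genInv_cdf_le ν hq))).trans_eq htail
    linarith
  · have : NullSingletonClass ν :=
      nullSingletonClass_of_indepFun (hmeas none) (hmeas (some (⟨0, by omega⟩, ⟨0, by omega⟩)))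
        (hindep.indepFun (by simp)) (hlaw _) (hlaw _) (hdist _ _ (by simp))
    rw [measureReal_Iio_genInv_cdf ν hq, htail]

/-- One-shot federated setting with `m` agents each holding `n` i.i.d.
scores with cdf `F`: the training-conditional coverage
`1 - α_{ℓ,k}(D) = P(Y ∈ Ĉ_{ℓ,k}(X) | D) = F(S_(ℓ,k))` satisfies
`P(1 - α_{ℓ,k}(D) ≥ F_{U_(ℓ:n)}⁻¹(F_{U_(k:m)}⁻¹(β))) ≥ 1 - β`,
with equality when the scores are almost surely distinct. -/
theorem conditional_coverage_qq {Ω : Type*} [MeasurableSpace Ω]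
    (μ : Measure Ω) [IsProbabilityMeasure μ]
    {n m : ℕ} (hn : 1 ≤ n) (hm : 1 ≤ m)
    (ℓ k : ℕ) (hℓ1 : 1 ≤ ℓ) (hℓn : ℓ ≤ n) (hk1 : 1 ≤ k) (hkm : k ≤ m)
    (β : ℝ) (hβ : β ∈ Ioo (0:ℝ) 1)
    (W : Option (Fin n × Fin m) → Ω → ℝ) (ν : Measure ℝ)
    (hmeas : ∀ a, Measurable (W a))
    (hindep : iIndepFun W μ)
    (hlaw : ∀ a, Measure.map (W a) μ = ν)
    (F : ℝ → ℝ) (hF : F = fun x => (ν (Iic x)).toReal)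
    (coverage : Ω → ℝ)
    (hcov : coverage = fun ω => F (qqStat ℓ k (fun i j => W (some (i, j)) ω))) :
    ENNReal.ofReal (1 - β)
      ≤ μ {ω | betaQuantile n ℓ (betaQuantile m k β) ≤ coverage ω}
    ∧ ((∀ a b : Option (Fin n × Fin m), a ≠ b → μ {ω | W a ω = W b ω} = 0) →
        (μ {ω | betaQuantile n ℓ (betaQuantile m k β) ≤ coverage ω}).toReal = 1 - β) :=
  conditional_coverage_qq_general μ ℓ k hℓ1 hℓn hk1 hkm β hβ W ν hmeas hindep hlaw F hF coverage
    hcov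
end
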